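/- arXiv:2501.13626 — 2 statements merged into one kernel-verified Lean document; each statement's English description precedes it below -/
import Mathlib

section
/- If (a_n) is a weakly density lifting invariant (weakly dli) arithmetic sequence, then t^s_{(d_n)}(T) ≠ t_{(d_n)}(T). -/
/-!
Pick `k₀ < k₁ < ⋯` in the witness set `A` with gaps at least `4` and let `x = ∑ᵢ 1 / a_{kᵢ}`.

If `a_k ∣ d_n ≤ a_{k+1}` and `kᵢ` is the first index above `k`, then all earlier `a_{kⱼ}` divide
`d_n`, so modulo `1` the number `d_n x` is `d_n` times the tail `∑_{j ≥ i} 1 / a_{kⱼ} ≤ 2 / a_{kᵢ}`.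
Hence `‖d_n x‖ ≤ 2 / 2^M` unless some `kᵢ` lies in `(k, k + M]`, and the `n` of that kind lie in
`L(A - m)` for some `m < M`, a set of density zero: `x ∈ t^s_{(d_n)}`.

On the other hand `s = ⌊b/2⌋ a_{kᵢ - 1}`, with `b = a_{kᵢ} / a_{kᵢ - 1}`, is a term of `(d_n)` and
`s x ≡ ⌊b/2⌋ / b + O(1/16)` modulo `1`, so `‖s x‖ ≥ 1/4` for arbitrarily large terms `s`:
`x ∉ t_{(d_n)}`.
-/

open Filter Topology Set

noncomputable section

/-- The sequence of ratios `b n = a n / a (n-1)` of an arithmetic sequence. -/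
def ratios (a : ℕ → ℕ) (n : ℕ) : ℕ := a n / a (n - 1)

/-- An arithmetic sequence: `a 0 = 1`, strictly increasing, each term divides the next. -/
def IsArithSeq (a : ℕ → ℕ) : Prop :=
  a 0 = 1 ∧ (∀ n, a n < a (n + 1)) ∧ (∀ n, a n ∣ a (n + 1))

/-- The indices `n_k` with `a k = d (n k)`: `n 0 = 1`, `n (k+1) = n k + (b (k+1) - 1)`. -/
def nseq (a : ℕ → ℕ) : ℕ → ℕ
  | 0 => 1
  | k + 1 => nseq a k + (ratios a (k + 1) - 1)

/-- The lifting function `L(A) = ⋃_{k ∈ A} [n_{k-1}, n_k - 1]`. -/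
def liftSet (a : ℕ → ℕ) (A : Set ℕ) : Set ℕ :=
  ⋃ k ∈ A, Set.Icc (nseq a (k - 1)) (nseq a k - 1)

/-- `A ⊆ ℕ` has natural density `δ`. -/
def HasDensity (A : Set ℕ) (δ : ℝ) : Prop :=
  Tendsto (fun n : ℕ => ((A ∩ Set.Iio n).ncard : ℝ) / n) atTop (𝓝 δ)

/-- The upper natural density of `A ⊆ ℕ`. -/
def upperDensity (A : Set ℕ) : ℝ :=
  limsup (fun n : ℕ => ((A ∩ Set.Iio n).ncard : ℝ) / n) atTop

/-- The sequence `(d n)`: the increasing enumeration of `{r * a k : k ≥ 0, 1 ≤ r < b (k+1)}`. -/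
def dSeq (a : ℕ → ℕ) : ℕ → ℕ :=
  Nat.nth (fun m => ∃ k r : ℕ, 1 ≤ r ∧ r < ratios a (k + 1) ∧ m = r * a k)

/-- The characterized subgroup `t_{(u n)}(𝕋)`. -/
def charSub (u : ℕ → ℤ) : Set (AddCircle (1 : ℝ)) :=
  {x | Tendsto (fun n => u n • x) atTop (𝓝 0)}

/-- The statistically characterized subgroup `t^s_{(u n)}(𝕋)`. -/
def statChar (u : ℕ → ℤ) : Set (AddCircle (1 : ℝ)) :=
  {x | ∀ ε : ℝ, 0 < ε → HasDensity {n : ℕ | ε ≤ ‖u n • x‖} 0}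

/-- Density lifting invariant. -/
def Dli (a : ℕ → ℕ) : Prop :=
  ∀ A : Set ℕ, A.Infinite → HasDensity A 0 → HasDensity (liftSet a A) 0

/-- Weakly density lifting invariant. -/
def WeaklyDli (a : ℕ → ℕ) : Prop :=
  ∃ A : Set ℕ, A.Infinite ∧ ∀ m : ℕ, HasDensity (liftSet a ((fun x => x - m) '' A)) 0

/-- Strongly non density lifting invariant. -/
def StronglyNonDli (a : ℕ → ℕ) : Prop :=
  ∀ A : Set ℕ, A.Infinite → 0 < upperDensity (liftSet a A)

local notation "𝕋" => AddCircle (1 : ℝ)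

lemma HasDensity.zero_of_subset {B C : Set ℕ} (h : B ⊆ C) (hC : HasDensity C 0) :
    HasDensity B 0 := by
  refine squeeze_zero (fun _ => by positivity) (fun n => ?_) hC
  gcongr
  exact (Set.finite_Iio n).inter_of_right _

lemma HasDensity.union_zero {B C : Set ℕ} (hB : HasDensity B 0) (hC : HasDensity C 0) :
    HasDensity (B ∪ C) 0 := by
  refine squeeze_zero (fun _ => by positivity) (fun n => ?_) (by simpa using hB.add hC)
  rw [← add_div, Set.union_inter_distrib_right]
  gcongr
  exact_mod_cast Set.ncard_union_le _ _

lemma Set.Finite.hasDensity_zero {F : Set ℕ} (hF : F.Finite) : HasDensity F 0 := by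
  refine squeeze_zero (fun _ => by positivity) (fun _ => ?_)
    (tendsto_const_div_atTop_nhds_zero_nat (F.ncard : ℝ))
  gcongr
  exact Set.inter_subset_left

lemma hasDensity_zero_biUnion_lt {f : ℕ → Set ℕ} (hf : ∀ m, HasDensity (f m) 0) (M : ℕ) :
    HasDensity (⋃ m < M, f m) 0 := by
  induction M with
  | zero => simpa using (Set.finite_empty (α := ℕ)).hasDensity_zero
  | succ M ih => rw [Set.biUnion_lt_succ]; exact ih.union_zero (hf M)

lemma AddCircle.norm_coe_le_abs {p : ℝ} (x : ℝ) : ‖(x : AddCircle p)‖ ≤ |x| :=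
  QuotientAddGroup.norm_mk_le_norm

lemma Nat.exists_le_lt_succ_of_strictMono {f : ℕ → ℕ} (hf : StrictMono f) {n : ℕ}
    (hn : f 0 ≤ n) : ∃ k, f k ≤ n ∧ n < f (k + 1) := by
  induction n, hn using Nat.le_induction with
  | base => exact ⟨0, le_rfl, hf (Nat.lt_succ_self 0)⟩
  | succ n _ ih =>
    obtain ⟨k, hk, hnk⟩ := ih
    rcases (Nat.succ_le_of_lt hnk).lt_or_eq with hlt | heq
    · exact ⟨k, by omega, hlt⟩
    · exact ⟨k + 1, heq.ge, heq.trans_lt (hf (Nat.lt_succ_self _))⟩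

lemma Nat.eventually_imp_of_eventually_nth {p q : ℕ → Prop} (hp : (Set.ofPred p).Infinite)
    (h : ∀ᶠ n in atTop, q (nth p n)) : ∀ᶠ m in atTop, p m → q m := by
  classical
  obtain ⟨N, hN⟩ := eventually_atTop.1 h
  filter_upwards [eventually_ge_atTop (nth p N)] with m hm hpm
  rw [← nth_count hpm]
  exact hN _ (count_nth_of_infinite hp N ▸ count_monotone p hm)

lemma Set.Infinite.exists_seq_mem_add_le {A : Set ℕ} (hA : A.Infinite) (g : ℕ) :
    ∃ ks : ℕ → ℕ, (∀ i, ks i ∈ A) ∧ 0 < ks 0 ∧ ∀ i, ks i + g ≤ ks (i + 1) := by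
  choose f hfA hf using hA.exists_gt
  refine ⟨fun i => (fun k => f (k + g))^[i] (f 0), fun i => ?_, hf 0, fun i => ?_⟩
  · cases i <;> simp only [Function.iterate_succ_apply', Function.iterate_zero_apply, hfA]
  · simp only [Function.iterate_succ_apply']
    exact (hf _).le

def invTail (c : ℕ → ℕ) (i : ℕ) : ℝ := ∑' j, ((c (j + i) : ℝ))⁻¹

lemma invTail_nonneg (c : ℕ → ℕ) (i : ℕ) : 0 ≤ invTail c i :=
  tsum_nonneg fun _ => by positivity

section Lacunary

variable {c : ℕ → ℕ} (hc0 : 0 < c 0) (hc : ∀ i, 2 * c i ≤ c (i + 1))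
include hc0 hc

lemma pos_of_two_mul_le (i : ℕ) : 0 < c i := by
  induction i with
  | zero => exact hc0
  | succ i ih => have := hc i; omega

omit hc0 in
lemma mul_two_pow_le_of_two_mul_le (i j : ℕ) : c i * 2 ^ j ≤ c (j + i) := by
  induction j with
  | zero => simp
  | succ j ih =>
    rw [pow_succ, add_right_comm]
    linarith [hc (j + i)]

lemma inv_add_le_of_two_mul_le (i j : ℕ) :
    ((c (j + i) : ℝ))⁻¹ ≤ ((c i : ℝ))⁻¹ * (1 / 2) ^ j := by
  rw [one_div, inv_pow, ← mul_inv]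
  have := pos_of_two_mul_le hc0 hc i
  exact inv_anti₀ (by positivity) (by exact_mod_cast mul_two_pow_le_of_two_mul_le hc i j)

lemma summable_inv_add (i : ℕ) : Summable fun j => ((c (j + i) : ℝ))⁻¹ :=
  Summable.of_nonneg_of_le (fun _ => by positivity) (inv_add_le_of_two_mul_le hc0 hc i)
    (summable_geometric_two.mul_left _)

lemma invTail_le (i : ℕ) : invTail c i ≤ 2 / c i := by
  calc invTail c i ≤ ∑' j, ((c i : ℝ))⁻¹ * (1 / 2) ^ j :=
        (summable_inv_add hc0 hc i).tsum_le_tsum (inv_add_le_of_two_mul_le hc0 hc i)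
          (summable_geometric_two.mul_left _)
    _ = 2 / c i := by rw [tsum_mul_left, tsum_geometric_two, inv_mul_eq_div]

lemma invTail_eq_inv_add (i : ℕ) : invTail c i = ((c i : ℝ))⁻¹ + invTail c (i + 1) := by
  rw [invTail, (summable_inv_add hc0 hc i).tsum_eq_zero_add, zero_add]
  simp only [invTail, add_right_comm _ 1 i, add_assoc]

lemma zsmul_invTail_zero {N i : ℕ} (hN : ∀ j < i, c j ∣ N) :
    (N : ℤ) • (invTail c 0 : 𝕋) = ((N * invTail c i : ℝ) : 𝕋) := by
  have hsplit : invTail c 0 = ∑ j ∈ Finset.range i, ((c j : ℝ))⁻¹ + invTail c i := by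
    simpa [invTail] using ((summable_inv_add hc0 hc 0).sum_add_tsum_nat_add i).symm
  have hhead : (N : ℝ) * ∑ j ∈ Finset.range i, ((c j : ℝ))⁻¹ =
      (∑ j ∈ Finset.range i, N / c j : ℕ) := by
    rw [Finset.mul_sum, Nat.cast_sum]
    refine Finset.sum_congr rfl fun j hj => ?_
    have hcj : (c j : ℝ) ≠ 0 := by exact_mod_cast (pos_of_two_mul_le hc0 hc j).ne'
    rw [Nat.cast_div (hN j (Finset.mem_range.1 hj)) hcj, div_eq_mul_inv]
  rw [← AddCircle.coe_zsmul, zsmul_eq_mul, Int.cast_natCast, hsplit, mul_add, hhead,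
    AddCircle.coe_add, ← nsmul_one, AddCircle.coe_nsmul, AddCircle.coe_period, smul_zero, zero_add]

lemma norm_zsmul_invTail_zero_le {N i : ℕ} (hN : ∀ j < i, c j ∣ N) :
    ‖(N : ℤ) • (invTail c 0 : 𝕋)‖ ≤ 2 * N / c i := by
  rw [zsmul_invTail_zero hc0 hc hN]
  have := invTail_nonneg c i
  calc _ ≤ |(N : ℝ) * invTail c i| := AddCircle.norm_coe_le_abs _
    _ = N * invTail c i := abs_of_nonneg (by positivity)
    _ ≤ N * (2 / c i) := by gcongr; exact invTail_le hc0 hc i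
    _ = 2 * N / c i := by ring

lemma le_norm_zsmul_invTail_zero {N i : ℕ} (hN : ∀ j < i, c j ∣ N) (hci : 16 * c i ≤ c (i + 1))
    (hN3 : c i ≤ 3 * N) (hN2 : 2 * N ≤ c i) : 1 / 4 ≤ ‖(N : ℤ) • (invTail c 0 : 𝕋)‖ := by
  have := pos_of_two_mul_le hc0 hc i
  have := pos_of_two_mul_le hc0 hc (i + 1)
  have := invTail_nonneg c (i + 1)
  have hci' : 16 * (c i : ℝ) ≤ c (i + 1) := by exact_mod_cast hci
  have hN3' : (c i : ℝ) ≤ 3 * N := by exact_mod_cast hN3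
  have hN2' : 2 * (N : ℝ) ≤ c i := by exact_mod_cast hN2
  have hhead : 1 / 3 ≤ ‖((N / c i : ℝ) : 𝕋)‖ := by
    rw [(AddCircle.norm_coe_eq_abs_iff 1 one_ne_zero).2, abs_of_nonneg (by positivity)]
    · rw [div_le_div_iff₀ (by norm_num) (by positivity)]; linarith
    · rw [abs_of_nonneg (by positivity), abs_one, div_le_div_iff₀ (by positivity) (by norm_num)]
      linarith
  have htail : ‖((N * invTail c (i + 1) : ℝ) : 𝕋)‖ ≤ 1 / 16 := by
    refine (AddCircle.norm_coe_le_abs _).trans ?_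
    have := invTail_le hc0 hc (i + 1)
    rw [abs_of_nonneg (by positivity)]
    calc (N : ℝ) * invTail c (i + 1) ≤ N * (2 / c (i + 1)) := by gcongr
      _ ≤ 1 / 16 := by
        rw [mul_div_assoc', div_le_div_iff₀ (by positivity) (by norm_num)]; linarith
  rw [zsmul_invTail_zero hc0 hc hN, invTail_eq_inv_add hc0 hc, mul_add, AddCircle.coe_add,
    ← div_eq_mul_inv]
  linarith [norm_sub_le_norm_add ((N / c i : ℝ) : 𝕋) ((N * invTail c (i + 1) : ℝ) : 𝕋)]

end Lacunary

def IsDTerm (a : ℕ → ℕ) (m : ℕ) : Prop :=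
  ∃ k r : ℕ, 1 ≤ r ∧ r < ratios a (k + 1) ∧ m = r * a k

lemma nseq_succ (a : ℕ → ℕ) (k : ℕ) : nseq a (k + 1) = nseq a k + (ratios a (k + 1) - 1) := rfl

namespace IsArithSeq

variable {a ks : ℕ → ℕ} (ha : IsArithSeq a)
include ha

lemma strictMono : StrictMono a := strictMono_nat_of_lt_succ ha.2.1

lemma pos (n : ℕ) : 0 < a n :=
  lt_of_lt_of_le (by rw [ha.1]; exact one_pos) (ha.strictMono.monotone (Nat.zero_le n))

lemma succ_eq_ratios_mul (k : ℕ) : a (k + 1) = ratios a (k + 1) * a k :=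
  (Nat.div_mul_cancel (ha.2.2 k)).symm

lemma two_le_ratios (k : ℕ) : 2 ≤ ratios a (k + 1) := by
  have h := ha.2.1 k
  rw [ha.succ_eq_ratios_mul k] at h
  by_contra! hb
  interval_cases ratios a (k + 1) <;> simp at h

lemma dvd_of_le {k l : ℕ} (h : k ≤ l) : a k ∣ a l := by
  induction l, h using Nat.le_induction with
  | base => exact dvd_rfl
  | succ l _ ih => exact ih.trans (ha.2.2 l)

lemma mul_two_pow_le (k j : ℕ) : a k * 2 ^ j ≤ a (k + j) := by
  induction j with
  | zero => simp
  | succ j ih =>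
    rw [← add_assoc, ha.succ_eq_ratios_mul, pow_succ, ← mul_assoc, mul_comm (ratios _ _)]
    exact Nat.mul_le_mul ih (ha.two_le_ratios _)

lemma two_pow_le (k : ℕ) : 2 ^ k ≤ a k := by
  simpa [ha.1] using ha.mul_two_pow_le 0 k

lemma two_pow_mul_le_comp {g : ℕ} (hks : ∀ i, ks i + g ≤ ks (i + 1)) (i : ℕ) :
    2 ^ g * a (ks i) ≤ a (ks (i + 1)) :=
  mul_comm (a (ks i)) _ ▸ (ha.mul_two_pow_le _ g).trans (ha.strictMono.monotone (hks i))

lemma two_mul_le_comp (hks : StrictMono ks) (i : ℕ) : 2 * a (ks i) ≤ a (ks (i + 1)) := by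
  simpa using ha.two_pow_mul_le_comp (g := 1) (fun i => hks (Nat.lt_add_one i)) i

lemma mul_mem_Ico {k r : ℕ} (hr : 1 ≤ r) (hrb : r < ratios a (k + 1)) :
    r * a k ∈ Set.Ico (a k) (a (k + 1)) :=
  ⟨Nat.le_mul_of_pos_left _ hr,
    ha.succ_eq_ratios_mul k ▸ Nat.mul_lt_mul_of_pos_right hrb (ha.pos k)⟩

lemma isDTerm_self (k : ℕ) : IsDTerm a (a k) :=
  ⟨k, 1, le_rfl, ha.two_le_ratios k, (one_mul _).symm⟩

lemma isDTerm_infinite : (Set.ofPred (IsDTerm a)).Infinite :=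
  Set.infinite_of_injective_forall_mem ha.strictMono.injective ha.isDTerm_self

lemma eq_mul_of_isDTerm_of_mem_Ico {m k : ℕ} (hm : IsDTerm a m)
    (hmk : m ∈ Set.Ico (a k) (a (k + 1))) : ∃ r, 1 ≤ r ∧ r < ratios a (k + 1) ∧ m = r * a k := by
  obtain ⟨j, r, hr, hrb, rfl⟩ := hm
  obtain ⟨hj, hj'⟩ := ha.mul_mem_Ico hr hrb
  obtain rfl : j = k := by
    have := ha.strictMono.lt_iff_lt.1 (hj.trans_lt hmk.2)
    have := ha.strictMono.lt_iff_lt.1 (hmk.1.trans_lt hj')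
    omega
  exact ⟨r, hr, hrb, rfl⟩

lemma dvd_of_isDTerm_of_lt {m k : ℕ} (hm : IsDTerm a m) (hkm : a k < m) : a k ∣ m := by
  obtain ⟨j, r, hr, hrb, rfl⟩ := hm
  have hkj : k < j + 1 := ha.strictMono.lt_iff_lt.1 (hkm.trans (ha.mul_mem_Ico hr hrb).2)
  exact (ha.dvd_of_le (Nat.lt_succ_iff.1 hkj)).trans (dvd_mul_left _ _)

lemma filter_Ico_isDTerm [DecidablePred (IsDTerm a)] (k : ℕ) :
    {m ∈ Finset.Ico (a k) (a (k + 1)) | IsDTerm a m} =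
      (Finset.Ico 1 (ratios a (k + 1))).image (· * a k) := by
  ext m
  simp only [Finset.mem_filter, Finset.mem_Ico, Finset.mem_image]
  constructor
  · rintro ⟨hmk, hm⟩
    obtain ⟨r, hr, hrb, rfl⟩ := ha.eq_mul_of_isDTerm_of_mem_Ico hm hmk
    exact ⟨r, ⟨hr, hrb⟩, rfl⟩
  · rintro ⟨r, ⟨hr, hrb⟩, rfl⟩
    exact ⟨ha.mul_mem_Ico hr hrb, k, r, hr, hrb, rfl⟩

lemma count_isDTerm_succ [DecidablePred (IsDTerm a)] (k : ℕ) :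
    Nat.count (IsDTerm a) (a (k + 1)) = Nat.count (IsDTerm a) (a k) + (ratios a (k + 1) - 1) := by
  rw [Nat.count_eq_card_filter_range, Nat.count_eq_card_filter_range, Finset.range_eq_Ico,
    Finset.range_eq_Ico, ← Finset.Ico_union_Ico_eq_Ico (Nat.zero_le _) (ha.2.1 k).le,
    Finset.filter_union, Finset.card_union_of_disjoint
      (Finset.disjoint_filter_filter (Finset.Ico_disjoint_Ico_consecutive _ _ _)),
    ha.filter_Ico_isDTerm, Finset.card_image_of_injective _ (mul_left_injective₀ (ha.pos k).ne'),
    Nat.card_Ico]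

lemma count_isDTerm_add_one [DecidablePred (IsDTerm a)] (k : ℕ) :
    Nat.count (IsDTerm a) (a k) + 1 = nseq a k := by
  induction k with
  | zero =>
    have h0 : ¬ IsDTerm a 0 := fun ⟨k, r, hr, _, h⟩ => (Nat.mul_pos hr (ha.pos k)).ne h
    simp [ha.1, Nat.count_one, h0, nseq]
  | succ k ih =>
    rw [ha.count_isDTerm_succ, nseq_succ, ← ih]
    have := ha.two_le_ratios k
    omega

lemma nseq_strictMono : StrictMono (nseq a) :=
  strictMono_nat_of_lt_succ fun k => by
    rw [nseq_succ]
    have := ha.two_le_ratios k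
    omega

lemma exists_mem_Icc_nseq {n : ℕ} (hn : 0 < n) :
    ∃ k, n ∈ Set.Icc (nseq a k) (nseq a (k + 1) - 1) := by
  obtain ⟨k, hk, hk'⟩ := Nat.exists_le_lt_succ_of_strictMono ha.nseq_strictMono (n := n) hn
  exact ⟨k, hk, by omega⟩

-- `dSeq a` is indexed from `0`, so `dSeq a n` is the paper's `d_{n+1}`; the block of indices
-- below is the one that `liftSet a` attaches to `k + 1`.
lemma dSeq_mem_Ioc {n k : ℕ} (hn : n ∈ Set.Icc (nseq a k) (nseq a (k + 1) - 1)) :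
    dSeq a n ∈ Set.Ioc (a k) (a (k + 1)) := by
  classical
  have hinf := ha.isDTerm_infinite
  have hcount (j : ℕ) : Nat.count (IsDTerm a) (a j + 1) = nseq a j := by
    rw [Nat.count_succ, if_pos (ha.isDTerm_self j), ha.count_isDTerm_add_one]
  have : nseq a k < nseq a (k + 1) := ha.nseq_strictMono (Nat.lt_add_one k)
  obtain ⟨hn, hn'⟩ := hn
  constructor
  · exact (Nat.count_le_iff_le_nth hinf).1 (hcount k ▸ hn)
  · exact Nat.lt_succ_iff.1 ((Nat.lt_nth_iff_count_lt hinf).1 (by rw [hcount]; omega))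

lemma dvd_dSeq {n k : ℕ} (hn : n ∈ Set.Icc (nseq a k) (nseq a (k + 1) - 1)) : a k ∣ dSeq a n :=
  ha.dvd_of_isDTerm_of_lt (Nat.nth_mem_of_infinite ha.isDTerm_infinite n) (ha.dSeq_mem_Ioc hn).1

lemma norm_dSeq_zsmul_le_or_mem_liftSet {A : Set ℕ} (hksA : ∀ i, ks i ∈ A) (hks : StrictMono ks)
    {n k : ℕ} (hn : n ∈ Set.Icc (nseq a k) (nseq a (k + 1) - 1)) (M : ℕ) :
    ‖(dSeq a n : ℤ) • (invTail (a ∘ ks) 0 : 𝕋)‖ ≤ 2 / 2 ^ M ∨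
      ∃ m < M, n ∈ liftSet a ((fun x => x - m) '' A) := by
  by_cases hnear : ∃ i, k + 1 ≤ ks i ∧ ks i ≤ k + M
  · obtain ⟨i, hi, hi'⟩ := hnear
    refine Or.inr ⟨ks i - (k + 1), by omega, Set.mem_biUnion (x := k + 1)
      ⟨ks i, hksA i, show ks i - (ks i - (k + 1)) = k + 1 by omega⟩ ?_⟩
    simpa using hn
  simp only [not_exists, not_and, not_le] at hnear
  classical
  have hex : ∃ i, k < ks i := ⟨k + 1, hks.id_le (k + 1)⟩
  have hfar : k + 1 + M ≤ ks (Nat.find hex) := by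
    have := hnear _ (Nat.find_spec hex)
    omega
  have hdvd : ∀ j < Nat.find hex, (a ∘ ks) j ∣ dSeq a n := fun j hj =>
    (ha.dvd_of_le (not_lt.1 (Nat.find_min hex hj))).trans (ha.dvd_dSeq hn)
  have := ha.pos (k + 1)
  have hfar' : (a (k + 1) : ℝ) * 2 ^ M ≤ a (ks (Nat.find hex)) := by
    exact_mod_cast (ha.mul_two_pow_le (k + 1) M).trans (ha.strictMono.monotone hfar)
  left
  calc _ ≤ 2 * (dSeq a n : ℝ) / a (ks (Nat.find hex)) :=
        norm_zsmul_invTail_zero_le (ha.pos (ks 0)) (ha.two_mul_le_comp hks) hdvd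
    _ ≤ 2 * a (k + 1) / (a (k + 1) * 2 ^ M) := by
        gcongr
        exact_mod_cast (ha.dSeq_mem_Ioc hn).2
    _ = 2 / 2 ^ M := by field_simp

lemma invTail_mem_statChar {A : Set ℕ}
    (hA : ∀ m, HasDensity (liftSet a ((fun x => x - m) '' A)) 0) (hksA : ∀ i, ks i ∈ A)
    (hks : StrictMono ks) : (invTail (a ∘ ks) 0 : 𝕋) ∈ statChar (fun n => (dSeq a n : ℤ)) := by
  intro ε hε
  obtain ⟨M, hM⟩ : ∃ M : ℕ, 2 / 2 ^ M < ε := by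
    obtain ⟨M, hM⟩ := exists_pow_lt_of_lt_one hε one_half_lt_one
    refine ⟨M + 1, lt_of_eq_of_lt ?_ hM⟩
    rw [pow_succ, one_div_pow]
    field_simp
  refine HasDensity.zero_of_subset (C := {0} ∪ ⋃ m < M, liftSet a ((fun x => x - m) '' A)) ?_
    ((Set.finite_singleton 0).hasDensity_zero.union_zero (hasDensity_zero_biUnion_lt hA M))
  intro n hn
  obtain rfl | hn0 := Nat.eq_zero_or_pos n
  · exact Or.inl rfl
  obtain ⟨k, hk⟩ := ha.exists_mem_Icc_nseq hn0
  obtain hle | ⟨m, hm, hmem⟩ := ha.norm_dSeq_zsmul_le_or_mem_liftSet hksA hks hk M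
  · exact absurd (le_trans hn hle) (not_le.2 hM)
  · exact Or.inr (Set.mem_biUnion hm hmem)

lemma frequently_isDTerm_and_le_norm_zsmul (hks : ∀ i, ks i + 4 ≤ ks (i + 1)) (hks0 : 0 < ks 0) :
    ∃ᶠ s in atTop, IsDTerm a s ∧ 1 / 4 ≤ ‖(s : ℤ) • (invTail (a ∘ ks) 0 : 𝕋)‖ := by
  have hksm : StrictMono ks := strictMono_nat_of_lt_succ fun i => by linarith [hks i]
  refine frequently_atTop.2 fun N => ?_
  obtain ⟨k, hk⟩ : ∃ k, ks N = k + 1 :=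
    ⟨ks N - 1, by have := hksm.monotone (Nat.zero_le N); omega⟩
  have hNk : N ≤ k := by
    have := hksm.add_le_nat N 0
    simp only [add_zero] at this
    omega
  have hb := ha.two_le_ratios k
  set r := ratios a (k + 1) / 2
  have hr : 1 ≤ r := by omega
  refine ⟨r * a k, ?_, ⟨k, r, hr, by omega, rfl⟩, ?_⟩
  · calc N ≤ k := hNk
      _ ≤ 2 ^ k := Nat.lt_two_pow_self.le
      _ ≤ a k := ha.two_pow_le k
      _ ≤ r * a k := Nat.le_mul_of_pos_left _ hr
  have hdvd : ∀ j < N, (a ∘ ks) j ∣ r * a k := fun j hj =>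
    (ha.dvd_of_le (by have := hksm hj; omega)).trans (dvd_mul_left _ _)
  have hak : a (ks N) = ratios a (k + 1) * a k := by rw [hk, ha.succ_eq_ratios_mul]
  refine le_norm_zsmul_invTail_zero (ha.pos (ks 0)) (ha.two_mul_le_comp hksm) hdvd
    (by simpa using ha.two_pow_mul_le_comp hks N) ?_ ?_ <;>
  · rw [hak, ← mul_assoc]
    exact Nat.mul_le_mul_right _ (by omega)

lemma invTail_not_mem_charSub (hks : ∀ i, ks i + 4 ≤ ks (i + 1)) (hks0 : 0 < ks 0) :
    (invTail (a ∘ ks) 0 : 𝕋) ∉ charSub (fun n => (dSeq a n : ℤ)) := by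
  intro hchar
  have hsmall : ∀ᶠ n in atTop, ‖(dSeq a n : ℤ) • (invTail (a ∘ ks) 0 : 𝕋)‖ < 1 / 4 :=
    (tendsto_norm_zero.comp hchar).eventually (gt_mem_nhds (by norm_num))
  obtain ⟨s, ⟨hs, hlarge⟩, hsmall⟩ :=
    ((ha.frequently_isDTerm_and_le_norm_zsmul hks hks0).and_eventually
      (Nat.eventually_imp_of_eventually_nth
        (q := fun s => ‖(s : ℤ) • (invTail (a ∘ ks) 0 : 𝕋)‖ < 1 / 4)
        ha.isDTerm_infinite hsmall)).exists
  exact (hsmall hs).not_ge hlarge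

end IsArithSeq

/-- if `(a n)` is weakly dli then `t^s_{(d n)}(𝕋) ≠ t_{(d n)}(𝕋)`. -/
theorem statChar_ne_charSub_of_weaklyDli (a : ℕ → ℕ) (ha : IsArithSeq a) (h : WeaklyDli a) :
    statChar (fun n => (dSeq a n : ℤ)) ≠ charSub (fun n => (dSeq a n : ℤ)) := by
  obtain ⟨A, hAinf, hA⟩ := h
  obtain ⟨ks, hksA, hks0, hks⟩ := hAinf.exists_seq_mem_add_le 4
  have hksm : StrictMono ks := strictMono_nat_of_lt_succ fun i => by linarith [hks i]
  intro heq
  exact ha.invTail_not_mem_charSub hks hks0 (heq ▸ ha.invTail_mem_statChar hA hksA hksm)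
end
end

section
/- The arithmetic sequence (a_n) with a_n = 2^{n(n+1)/2} (i.e., with ratios b_n = 2^n) is strongly non density lifting invariant (strongly non dli). -/
open Filter Topology Set

noncomputable section

/-!
Proof idea: for `k ∈ A` the lifted set contains the whole block `[n_{k-1}, n_k)`, of length
`b_k - 1`. When the last block always occupies a fixed proportion `c` of `[0, n_k)`, every
`k ∈ A` gives a counting ratio at least `c`, and infinitely many of them give upper density
at least `c`. For `b_k = 2^k` one has `n_k = 2^(k+1) - 1 - k`, and `c = 1/4` works.
-/

lemma ncard_inter_Iio_le (S : Set ℕ) (n : ℕ) : (S ∩ Iio n).ncard ≤ n := by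
  calc (S ∩ Iio n).ncard ≤ (Iio n).ncard := ncard_le_ncard inter_subset_right (finite_Iio n)
    _ = n := by rw [← Finset.coe_Iio, ncard_coe_finset, Nat.card_Iio]

lemma le_upperDensity_of_frequently {S : Set ℕ} {c : ℝ}
    (h : ∃ᶠ n in atTop, c ≤ ((S ∩ Iio n).ncard : ℝ) / n) : c ≤ upperDensity S := by
  refine le_limsup_of_frequently_le h ⟨1, eventually_map.mpr (Eventually.of_forall fun n => ?_)⟩
  exact div_le_one_of_le₀ (by exact_mod_cast ncard_inter_Iio_le S n) n.cast_nonneg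

lemma one_le_nseq (a : ℕ → ℕ) (k : ℕ) : 1 ≤ nseq a k := by
  induction k with
  | zero => rfl
  | succ k ih => exact ih.trans (Nat.le_add_right _ _)

lemma ratios_sub_one_le_ncard_liftSet_inter_Iio {a : ℕ → ℕ} {A : Set ℕ} {k : ℕ}
    (hkA : k ∈ A) (hk : 1 ≤ k) :
    ratios a k - 1 ≤ (liftSet a A ∩ Iio (nseq a k)).ncard := by
  obtain ⟨j, rfl⟩ := Nat.exists_eq_add_of_le' hk
  have hblock : Icc (nseq a j) (nseq a (j + 1) - 1) ⊆ liftSet a A ∩ Iio (nseq a (j + 1)) :=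
    fun x hx => ⟨mem_biUnion hkA hx, Nat.lt_of_le_pred (one_le_nseq a (j + 1)) hx.2⟩
  calc ratios a (j + 1) - 1 = (Icc (nseq a j) (nseq a (j + 1) - 1)).ncard := by
        have := one_le_nseq a j
        rw [← Finset.coe_Icc, ncard_coe_finset, Nat.card_Icc, nseq]; omega
    _ ≤ _ := ncard_le_ncard hblock ((finite_Iio _).inter_of_right _)

theorem stronglyNonDli_of_eventually_le {a : ℕ → ℕ} {c : ℝ} (hc : 0 < c)
    (hn : Tendsto (nseq a) atTop atTop)
    (h : ∀ᶠ k in atTop, c * nseq a k ≤ (ratios a k - 1 : ℕ)) : StronglyNonDli a := by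
  intro A hA
  refine hc.trans_le (le_upperDensity_of_frequently ?_)
  rw [frequently_atTop]
  intro N
  obtain ⟨k, hkA, hkc, hkN, hk⟩ := ((Nat.frequently_atTop_iff_infinite.mpr hA).and_eventually
    (h.and ((tendsto_atTop.mp hn N).and (eventually_ge_atTop 1)))).exists
  refine ⟨nseq a k, hkN, (le_div_iff₀ ?_).mpr (hkc.trans ?_)⟩
  · exact_mod_cast one_le_nseq a k
  · exact_mod_cast ratios_sub_one_le_ncard_liftSet_inter_Iio hkA hk

lemma ratios_two_pow {n : ℕ} (hn : 1 ≤ n) :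
    ratios (fun n => 2 ^ (n * (n + 1) / 2)) n = 2 ^ n := by
  obtain ⟨m, rfl⟩ := Nat.exists_eq_add_of_le' hn
  have htri : (m + 1) * (m + 1 + 1) / 2 = m * (m + 1) / 2 + (m + 1) := by
    rw [show (m + 1) * (m + 1 + 1) = m * (m + 1) + 2 * (m + 1) by ring,
      Nat.add_mul_div_left _ _ two_pos]
  simp only [ratios, Nat.add_sub_cancel, htri, pow_add]
  exact Nat.mul_div_cancel_left _ (by positivity)

lemma nseq_two_pow (k : ℕ) :
    nseq (fun n => 2 ^ (n * (n + 1) / 2)) k = 2 ^ (k + 1) - 1 - k := by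
  induction k with
  | zero => rfl
  | succ k ih =>
    have := Nat.lt_two_pow_self (n := k + 1)
    rw [nseq, ih, ratios_two_pow (Nat.le_add_left 1 k), pow_succ 2 (k + 1)]
    omega

/-- the sequence `a n = 2 ^ (n (n+1) / 2)` is strongly non dli. -/
theorem stronglyNonDli_two_pow :
    StronglyNonDli (fun n => 2 ^ (n * (n + 1) / 2)) := by
  refine stronglyNonDli_of_eventually_le (c := 1 / 4) (by norm_num) ?_ ?_
  · refine tendsto_atTop_mono (fun k => ?_) tendsto_id
    have := Nat.lt_two_pow_self (n := k)
    rw [nseq_two_pow, pow_succ, id]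
    omega
  · filter_upwards [eventually_ge_atTop 1] with k hk
    have := Nat.one_lt_two_pow (Nat.one_le_iff_ne_zero.mp hk)
    have hblock : 2 ^ (k + 1) - 1 - k ≤ 4 * (2 ^ k - 1) := by rw [pow_succ]; omega
    rw [nseq_two_pow, ratios_two_pow hk, one_div, inv_mul_le_iff₀ (by norm_num)]
    exact_mod_cast hblock
end
end
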